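/- For any Lie groupoid Γ ⇉ Γ₀, the category of principal G-bundles over Γ ⇉ Γ₀ is equivalent to the category of generalized homomorphisms from Γ ⇉ Γ₀ to G ⇉ · . Consequently, if Γ' and Γ are Morita equivalent Lie groupoids, there is an equivalence between the category of principal G-bundles over Γ' and the category of principal G-bundles over Γ. -/

import Mathlib

/-!
Shared abstract framework for "Chern-Weil map for principal bundles over groupoids"
(Laurent-Gengoux, Tu, Xu).  Smooth structures are abstracted away: a Lie groupoid is
modelled by its underlying (set-level) groupoid, and the de Rham functor is modelled
by an abstract contravariant functor of graded-commutative differential algebras.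
-/

open scoped TensorProduct

noncomputable section

/-- A (Lie) groupoid `Γ ⇉ Γ₀`; `s` is the source (`β`), `t` is the target (`α`). -/
structure Gpd where
  O : Type
  M : Type
  s : M → O
  t : M → O
  comp : ∀ g h : M, s g = t h → M
  unit : O → M
  inv : M → M
  s_comp : ∀ g h hc, s (comp g h hc) = s h
  t_comp : ∀ g h hc, t (comp g h hc) = t g
  s_unit : ∀ x, s (unit x) = x
  t_unit : ∀ x, t (unit x) = x
  s_inv : ∀ g, s (inv g) = t g
  t_inv : ∀ g, t (inv g) = s g
  comp_assoc : ∀ g h k (hgh : s g = t h) (hhk : s h = t k),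
    comp (comp g h hgh) k ((s_comp g h hgh).trans hhk) =
      comp g (comp h k hhk) (hgh.trans (t_comp h k hhk).symm)
  unit_comp : ∀ g, comp (unit (t g)) g (s_unit (t g)) = g
  comp_unit : ∀ g, comp g (unit (s g)) (t_unit (s g)).symm = g
  inv_comp : ∀ g, comp (inv g) g (s_inv g) = unit (s g)
  comp_inv : ∀ g, comp g (inv g) (t_inv g).symm = unit (t g)

/-- A principal `G`-bundle datum `P → B` (right `G`-action covering `proj`). -/
structure PrinBundle (G : Type) [Group G] (P B : Type) where
  proj : P → B
  act : P → G → P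
  act_one : ∀ p, act p 1 = p
  act_mul : ∀ p g h, act (act p g) h = act p (g * h)
  proj_act : ∀ p g, proj (act p g) = proj p

/-- Principality: `proj` is onto and `G` acts freely and transitively on fibres. -/
def PrinBundle.IsPrincipal {G P B : Type} [Group G] (Bd : PrinBundle G P B) : Prop :=
  Function.Surjective Bd.proj ∧ ∀ p q, Bd.proj p = Bd.proj q → ∃! g, Bd.act p g = q

/-- A principal `G`-bundle over the groupoid `Γ ⇉ Γ₀`: a principal `G`-bundle
`P → Γ₀` together with a left `Γ`-action commuting with the `G`-action. -/
structure GpdBundle (G : Type) [Group G] (Γ : Gpd) (P : Type)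
    extends PrinBundle G P Γ.O where
  gact : ∀ (γ : Γ.M) (p : P), Γ.s γ = proj p → P
  gact_proj : ∀ γ p h, proj (gact γ p h) = Γ.t γ
  gact_unit : ∀ p, gact (Γ.unit (proj p)) p (Γ.s_unit _) = p
  gact_comp : ∀ γ₁ γ₂ p (h₁ : Γ.s γ₁ = Γ.t γ₂) (h₂ : Γ.s γ₂ = proj p),
    gact γ₁ (gact γ₂ p h₂) (h₁.trans (gact_proj γ₂ p h₂).symm)
      = gact (Γ.comp γ₁ γ₂ h₁) p ((Γ.s_comp γ₁ γ₂ h₁).trans h₂)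
  gact_act : ∀ γ p g (h : Γ.s γ = proj p),
    gact γ (act p g) (h.trans (proj_act p g).symm) = act (gact γ p h) g

/-- Carrier of an abstract "differential forms" functor. -/
structure FormsCarrier where
  Ω : Type → Type
  ringΩ : ∀ X, Ring (Ω X)

attribute [instance] FormsCarrier.ringΩ

structure FormsCarrier₂ extends FormsCarrier where
  algΩ : ∀ X, Algebra ℝ (Ω X)

attribute [instance] FormsCarrier₂.algΩ

/-- An abstract de Rham functor: to each space `X` a graded-commutative differential
`ℝ`-algebra `Ω X`, contravariantly functorial in `X`. -/
structure FormsTheory extends FormsCarrier₂ where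
  d : ∀ X : Type, Ω X →ₗ[ℝ] Ω X
  pull : ∀ {X Y : Type}, (X → Y) → (Ω Y →ₐ[ℝ] Ω X)
  gr : ∀ X : Type, ℕ → Submodule ℝ (Ω X)
  d_d : ∀ (X : Type) ω, d X (d X ω) = 0
  d_one : ∀ X : Type, d X 1 = 0
  pull_id : ∀ (X : Type) ω, pull (id : X → X) ω = ω
  pull_comp : ∀ {X Y Z : Type} (f : X → Y) (g : Y → Z) ω,
    pull (g ∘ f) ω = pull f (pull g ω)
  pull_d : ∀ {X Y : Type} (f : X → Y) ω, pull f (d Y ω) = d X (pull f ω)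
  d_gr : ∀ (X : Type) k ω, ω ∈ gr X k → d X ω ∈ gr X (k + 1)
  mul_gr : ∀ (X : Type) k l a b, a ∈ gr X k → b ∈ gr X l → a * b ∈ gr X (k + l)
  pull_gr : ∀ {X Y : Type} (f : X → Y) k ω, ω ∈ gr Y k → pull f ω ∈ gr X k
  one_gr : ∀ X : Type, (1 : Ω X) ∈ gr X 0
  comm_gr : ∀ (X : Type) k l a b, a ∈ gr X k → b ∈ gr X l →
    a * b = ((-1 : ℝ) ^ (k * l)) • (b * a)

/-- Degree-`k` part of the `𝔤`-valued forms `Ω X ⊗ 𝔤`. -/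
def grT (F : FormsTheory) (X : Type) (𝔤 : Type) [AddCommGroup 𝔤] [Module ℝ 𝔤] (k : ℕ) :
    Submodule ℝ (F.Ω X ⊗[ℝ] 𝔤) :=
  LinearMap.range (TensorProduct.map (F.gr X k).subtype (LinearMap.id (M := 𝔤)))

/-- Pull-back of `𝔤`-valued forms. -/
def pullT (F : FormsTheory) {X Y : Type} (f : X → Y)
    (𝔤 : Type) [AddCommGroup 𝔤] [Module ℝ 𝔤] :
    F.Ω Y ⊗[ℝ] 𝔤 →ₗ[ℝ] F.Ω X ⊗[ℝ] 𝔤 :=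
  LinearMap.rTensor 𝔤 (F.pull f).toLinearMap

attribute [local instance 100] LieRing.ofAssociativeRing

/-- The bracket `[ω₁ ⊗ X₁, ω₂ ⊗ X₂] = (ω₁ ∧ ω₂) ⊗ [X₁, X₂]` on `A ⊗ 𝔤`. -/
def brT (A : Type) [Ring A] [Algebra ℝ A] (𝔤 : Type) [LieRing 𝔤] [LieAlgebra ℝ 𝔤] :
    A ⊗[ℝ] 𝔤 →ₗ[ℝ] A ⊗[ℝ] 𝔤 →ₗ[ℝ] A ⊗[ℝ] 𝔤 :=
  TensorProduct.curry
    ((TensorProduct.map (LinearMap.mul' ℝ A)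
        (TensorProduct.lift ((LieAlgebra.ad ℝ 𝔤).toLinearMap))).comp
      (TensorProduct.tensorTensorTensorComm ℝ A 𝔤 A 𝔤).toLinearMap)

/-- Contraction operators `i_X` by the fundamental vector fields of the `G`-action
(the `G`-differential algebra structure on `Ω P`). -/
structure ContractionData (F : FormsTheory) (𝔤 : Type) [AddCommGroup 𝔤] [Module ℝ 𝔤]
    (P : Type) where
  i : 𝔤 → (F.Ω P →ₗ[ℝ] F.Ω P)
  i_anticomm : ∀ X Y ω, i X (i Y ω) + i Y (i X ω) = 0

/-- A pseudo-connection: a connection 1-form `θ ∈ Ω¹(P) ⊗ 𝔤` for the `G`-bundle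
`P → Γ₀`, forgetting the `Γ`-action: `θ` has degree 1, `i_X θ = 1 ⊗ X`, and `θ` is
`G`-equivariant (`R_g^* θ = Ad_{g⁻¹} θ`). -/
def IsPseudoConn (G : Type) [Group G] (𝔤 : Type) [LieRing 𝔤] [LieAlgebra ℝ 𝔤]
    (Ad : G →* Module.End ℝ 𝔤) {Γ : Gpd} {P : Type}
    (F : FormsTheory) (B : GpdBundle G Γ P) (cd : ContractionData F 𝔤 P)
    (θ : F.Ω P ⊗[ℝ] 𝔤) : Prop :=
  θ ∈ grT F P 𝔤 1 ∧
  (∀ X : 𝔤, LinearMap.rTensor 𝔤 (cd.i X) θ = (1 : F.Ω P) ⊗ₜ[ℝ] X) ∧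
  (∀ g : G, pullT F (fun p => B.act p g) 𝔤 θ = LinearMap.lTensor (F.Ω P) (Ad g⁻¹) θ)

/-- Space of the transformation groupoid `Q = Γ ×_{Γ₀} P ⇉ P`. -/
def QSp {G : Type} [Group G] {Γ : Gpd} {P : Type} (B : GpdBundle G Γ P) : Type :=
  {x : Γ.M × P // Γ.s x.1 = B.proj x.2}

/-- Source map `β(γ, p) = p` of the transformation groupoid. -/
def Qbeta {G : Type} [Group G] {Γ : Gpd} {P : Type} (B : GpdBundle G Γ P) :
    QSp B → P := fun x => x.1.2

/-- Target map `α(γ, p) = γ · p` of the transformation groupoid. -/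
def Qalpha {G : Type} [Group G] {Γ : Gpd} {P : Type} (B : GpdBundle G Γ P) :
    QSp B → P := fun x => B.gact x.1.1 x.1.2 x.2

/-- The simplicial differential `∂ = β^* - α^*` (with respect to the transformation
groupoid `Q ⇉ P`), on `𝔤`-valued forms. -/
def partialT {G : Type} [Group G] {Γ : Gpd} {P : Type}
    (F : FormsTheory) (𝔤 : Type) [AddCommGroup 𝔤] [Module ℝ 𝔤] (B : GpdBundle G Γ P) :
    F.Ω P ⊗[ℝ] 𝔤 →ₗ[ℝ] F.Ω (QSp B) ⊗[ℝ] 𝔤 :=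
  pullT F (Qbeta B) 𝔤 - pullT F (Qalpha B) 𝔤

/-- The curvature `Ω = dθ + ½ [θ, θ]` of a pseudo-connection. -/
def curv (F : FormsTheory) {P : Type} (𝔤 : Type) [LieRing 𝔤] [LieAlgebra ℝ 𝔤]
    (θ : F.Ω P ⊗[ℝ] 𝔤) : F.Ω P ⊗[ℝ] 𝔤 :=
  LinearMap.rTensor 𝔤 (F.d P) θ + (1 / 2 : ℝ) • (brT (F.Ω P) 𝔤 θ θ)

/-- Pairs of composable arrows: level 2 of the nerve of `Γ`. -/
def N2 (Γ : Gpd) : Type := {x : Γ.M × Γ.M // Γ.s x.1 = Γ.t x.2}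

def n2e0 (Γ : Gpd) : N2 Γ → Γ.M := fun x => x.1.2
def n2e1 (Γ : Gpd) : N2 Γ → Γ.M := fun x => Γ.comp x.1.1 x.1.2 x.2
def n2e2 (Γ : Gpd) : N2 Γ → Γ.M := fun x => x.1.1

/-- The total de Rham complex `(Ω(Γ_•), δ = (-1)^p d + ∂, ∨)` of the nerve of a
groupoid with objects `X0`, arrows `X1` (source `β`, target `α`) and composable
pairs `X2` (face maps `e0, e1, e2`), hypothesised abstractly: an `ℝ`-algebra `T`
under the cup product, with total differential `δ` and with the inclusions of the
low columns satisfying the defining relations of the double complex. -/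
structure NerveDR (F : FormsTheory) (X0 X1 X2 : Type)
    (β α : X1 → X0) (e0 e1 e2 : X2 → X1) where
  T : Type
  ringT : Ring T
  algT : Algebra ℝ T
  δ : T →ₗ[ℝ] T
  δ_δ : ∀ a, δ (δ a) = 0
  δ_one : δ 1 = 0
  δ_mul_closed : ∀ a b, δ a = 0 → δ b = 0 → δ (a * b) = 0
  ι0 : F.Ω X0 →ₗ[ℝ] T
  ι1 : F.Ω X1 →ₗ[ℝ] T
  ι2 : F.Ω X2 →ₗ[ℝ] T
  ι0_injective : Function.Injective ι0
  ι0_one : ι0 1 = 1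
  ι0_mul : ∀ a b, ι0 a * ι0 b = ι0 (a * b)
  δ_ι0 : ∀ ω, δ (ι0 ω) = ι0 (F.d X0 ω) + ι1 (F.pull β ω - F.pull α ω)
  δ_ι1 : ∀ ω, δ (ι1 ω) = - ι1 (F.d X1 ω) +
    ι2 (F.pull e0 ω - F.pull e1 ω + F.pull e2 ω)
  cup01 : ∀ (k : ℕ) (a : F.Ω X0) (b : F.Ω X1), a ∈ F.gr X0 k →
    ι0 a * ι1 b = ((-1 : ℝ) ^ k) • ι1 (F.pull α a * b)
  cup10 : ∀ (a : F.Ω X1) (b : F.Ω X0), ι1 a * ι0 b = ι1 (a * F.pull β b)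

attribute [instance] NerveDR.ringT NerveDR.algT

/-- The de Rham double complex of the nerve `Γ_•` of a groupoid `Γ`. -/
abbrev GpdDR (F : FormsTheory) (Γ : Gpd) :=
  NerveDR F Γ.O Γ.M (N2 Γ) Γ.s Γ.t (n2e0 Γ) (n2e1 Γ) (n2e2 Γ)

/-- Closed forms `Z^*` of the total complex, as a subalgebra. -/
def ZSub {F : FormsTheory} {X0 X1 X2 : Type} {β α : X1 → X0} {e0 e1 e2 : X2 → X1}
    (D : NerveDR F X0 X1 X2 β α e0 e1 e2) : Subalgebra ℝ D.T where
  carrier := {a | D.δ a = 0}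
  mul_mem' := fun ha hb => D.δ_mul_closed _ _ ha hb
  one_mem' := D.δ_one
  add_mem' := fun {a b} ha hb => by
    have ha' : D.δ a = 0 := ha
    have hb' : D.δ b = 0 := hb
    show D.δ (a + b) = 0
    rw [map_add, ha', hb', add_zero]
  zero_mem' := by simp
  algebraMap_mem' := fun r => by
    show D.δ _ = 0
    rw [Algebra.algebraMap_eq_smul_one, map_smul, D.δ_one, smul_zero]

theorem mem_ZSub {F : FormsTheory} {X0 X1 X2 : Type} {β α : X1 → X0}
    {e0 e1 e2 : X2 → X1} {D : NerveDR F X0 X1 X2 β α e0 e1 e2} {a : D.T} :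
    a ∈ ZSub D ↔ D.δ a = 0 := Iff.rfl

/-- Two closed forms are identified in cohomology iff they differ by a coboundary. -/
def exRel {F : FormsTheory} {X0 X1 X2 : Type} {β α : X1 → X0} {e0 e1 e2 : X2 → X1}
    (D : NerveDR F X0 X1 X2 β α e0 e1 e2) : ↥(ZSub D) → ↥(ZSub D) → Prop :=
  fun a b => ∃ c : D.T, (a : D.T) - b = D.δ c

/-- The de Rham cohomology ring `H^*` of the total complex. -/
def Hcoh {F : FormsTheory} {X0 X1 X2 : Type} {β α : X1 → X0} {e0 e1 e2 : X2 → X1}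
    (D : NerveDR F X0 X1 X2 β α e0 e1 e2) : Type :=
  RingQuot (exRel D)

instance {F : FormsTheory} {X0 X1 X2 : Type} {β α : X1 → X0} {e0 e1 e2 : X2 → X1}
    (D : NerveDR F X0 X1 X2 β α e0 e1 e2) : Ring (Hcoh D) := by
  unfold Hcoh; infer_instance

instance {F : FormsTheory} {X0 X1 X2 : Type} {β α : X1 → X0} {e0 e1 e2 : X2 → X1}
    (D : NerveDR F X0 X1 X2 β α e0 e1 e2) : Algebra ℝ (Hcoh D) := by
  unfold Hcoh; infer_instance

/-- Projection from closed forms onto cohomology classes. -/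
def toH {F : FormsTheory} {X0 X1 X2 : Type} {β α : X1 → X0} {e0 e1 e2 : X2 → X1}
    (D : NerveDR F X0 X1 X2 β α e0 e1 e2) : ↥(ZSub D) →ₐ[ℝ] Hcoh D :=
  RingQuot.mkAlgHom ℝ (exRel D)

/-- Polynomial functions on `𝔤`: the subalgebra of `𝔤 → ℝ` generated by the linear
functionals (i.e. `S(𝔤^*)` realised as functions). -/
def polySub (𝔤 : Type) [AddCommGroup 𝔤] [Module ℝ 𝔤] : Subalgebra ℝ (𝔤 → ℝ) :=
  Algebra.adjoin ℝ {f : 𝔤 → ℝ | ∃ l : 𝔤 →ₗ[ℝ] ℝ, f = ⇑l}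

/-- `Ad`-invariant functions on `𝔤`. -/
def invSub (G : Type) [Group G] (𝔤 : Type) [AddCommGroup 𝔤] [Module ℝ 𝔤]
    (Ad : G →* Module.End ℝ 𝔤) : Subalgebra ℝ (𝔤 → ℝ) where
  carrier := {f | ∀ (g : G) (x : 𝔤), f (Ad g x) = f x}
  mul_mem' := fun hf hg g x => by simp only [Pi.mul_apply, hf g x, hg g x]
  one_mem' := fun g x => rfl
  add_mem' := fun hf hg g x => by simp only [Pi.add_apply, hf g x, hg g x]
  zero_mem' := fun g x => rfl
  algebraMap_mem' := fun r g x => rfl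

/-- The algebra `S(𝔤^*)^G` of `G`-invariant polynomials on `𝔤`. -/
def invPoly (G : Type) [Group G] (𝔤 : Type) [AddCommGroup 𝔤] [Module ℝ 𝔤]
    (Ad : G →* Module.End ℝ 𝔤) : Subalgebra ℝ (𝔤 → ℝ) :=
  polySub 𝔤 ⊓ invSub G 𝔤 Ad

/-- A Chern-Weil system for a principal `G`-bundle over a groupoid: for every
pseudo-connection `θ` a cochain-level map `z_θ : S(𝔤^*)^G → Z^*(Γ_•)` with values in
closed forms, all inducing one and the same algebra homomorphism
`w : S(𝔤^*)^G → H^*(Γ_•)` on cohomology (independence of the pseudo-connection). -/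
structure CWSystem (G : Type) [Group G] (𝔤 : Type) [LieRing 𝔤] [LieAlgebra ℝ 𝔤]
    (Ad : G →* Module.End ℝ 𝔤) {Γ : Gpd} {P : Type}
    (F : FormsTheory) (B : GpdBundle G Γ P) (cd : ContractionData F 𝔤 P)
    (D : GpdDR F Γ) where
  z : ∀ θ : F.Ω P ⊗[ℝ] 𝔤, IsPseudoConn G 𝔤 Ad F B cd θ →
    (↥(invPoly G 𝔤 Ad) → ↥(ZSub D))
  w : ↥(invPoly G 𝔤 Ad) →ₐ[ℝ] Hcoh D
  z_w : ∀ θ hθ f, toH D (z θ hθ f) = w f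

end

noncomputable section

open CategoryTheory

/-- The category of principal `G`-bundles over the groupoid `Γ ⇉ Γ₀`. -/
structure BdlObj (G : Type) [Group G] (Γ : Gpd) where
  P : Type
  B : GpdBundle G Γ P
  hB : B.toPrinBundle.IsPrincipal

instance bdlCategory (G : Type) [Group G] (Γ : Gpd) : Category (BdlObj G Γ) where
  Hom A₁ A₂ := {f : A₁.P → A₂.P //
    (∀ p, A₂.B.proj (f p) = A₁.B.proj p) ∧
    (∀ p g, f (A₁.B.act p g) = A₂.B.act (f p) g) ∧
    (∀ γ p (h : Γ.s γ = A₁.B.proj p) (h' : Γ.s γ = A₂.B.proj (f p)),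
      f (A₁.B.gact γ p h) = A₂.B.gact γ (f p) h')}
  id A := ⟨id, fun _ => rfl, fun _ _ => rfl, fun _ _ _ _ => rfl⟩
  comp {A₁ A₂ A₃} f g := ⟨g.1 ∘ f.1,
    fun p => (g.2.1 (f.1 p)).trans (f.2.1 p),
    fun p gg => by dsimp; rw [f.2.2.1, g.2.2.1],
    fun γ p h h' => by
      dsimp
      rw [f.2.2.2 γ p h (h.trans (f.2.1 p).symm),
        g.2.2.2 γ (f.1 p) (h.trans (f.2.1 p).symm) h']⟩
  id_comp _ := Subtype.ext rfl
  comp_id _ := Subtype.ext rfl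
  assoc _ _ _ := Subtype.ext rfl

/-- A Lie group `G`, regarded as the one-object groupoid `G ⇉ ·`. -/
def groupGpd (G : Type) [Group G] : Gpd where
  O := Unit
  M := G
  s _ := ()
  t _ := ()
  comp g h _ := g * h
  unit _ := 1
  inv g := g⁻¹
  s_comp := fun _ _ _ => rfl
  t_comp := fun _ _ _ => rfl
  s_unit := fun x => by cases x; rfl
  t_unit := fun x => by cases x; rfl
  s_inv := fun _ => rfl
  t_inv := fun _ => rfl
  comp_assoc := fun g h k _ _ => mul_assoc g h k
  unit_comp := fun g => one_mul g
  comp_unit := fun g => mul_one g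
  inv_comp := fun g => inv_mul_cancel g
  comp_inv := fun g => mul_inv_cancel g

/-- A generalized homomorphism `Γ₀ ←τ Z →σ Λ₀` from `Γ` to `Λ`: commuting left
`Γ`- and right `Λ`-actions on `Z` making `Z` a principal `Λ`-bundle over `Γ₀`. -/
structure GenHom (Γ Λ : Gpd) where
  Z : Type
  τ : Z → Γ.O
  σ : Z → Λ.O
  lact : ∀ (γ : Γ.M) (z : Z), Γ.s γ = τ z → Z
  ract : ∀ (z : Z) (δ : Λ.M), σ z = Λ.t δ → Z
  τ_lact : ∀ γ z h, τ (lact γ z h) = Γ.t γ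
  σ_lact : ∀ γ z h, σ (lact γ z h) = σ z
  τ_ract : ∀ z δ h, τ (ract z δ h) = τ z
  σ_ract : ∀ z δ h, σ (ract z δ h) = Λ.s δ
  lact_unit : ∀ z, lact (Γ.unit (τ z)) z (Γ.s_unit _) = z
  lact_comp : ∀ γ₁ γ₂ z (h₁ : Γ.s γ₁ = Γ.t γ₂) (h₂ : Γ.s γ₂ = τ z),
    lact γ₁ (lact γ₂ z h₂) (h₁.trans (τ_lact γ₂ z h₂).symm)
      = lact (Γ.comp γ₁ γ₂ h₁) z ((Γ.s_comp _ _ _).trans h₂)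
  ract_unit : ∀ z, ract z (Λ.unit (σ z)) (Λ.t_unit _).symm = z
  ract_comp : ∀ z δ₁ δ₂ (h₁ : σ z = Λ.t δ₁) (h₂ : Λ.s δ₁ = Λ.t δ₂),
    ract (ract z δ₁ h₁) δ₂ ((σ_ract z δ₁ h₁).trans h₂)
      = ract z (Λ.comp δ₁ δ₂ h₂) (h₁.trans (Λ.t_comp _ _ _).symm)
  act_comm : ∀ γ z δ (hγ : Γ.s γ = τ z) (hδ : σ z = Λ.t δ),
    ract (lact γ z hγ) δ ((σ_lact γ z hγ).trans hδ)
      = lact γ (ract z δ hδ) (hγ.trans (τ_ract z δ hδ).symm)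
  τ_surj : Function.Surjective τ
  principal : ∀ z z', τ z = τ z' → ∃ (δ : Λ.M) (h : σ z = Λ.t δ),
    ract z δ h = z' ∧ ∀ (δ₂ : Λ.M) (h₂ : σ z = Λ.t δ₂), ract z δ₂ h₂ = z' → δ₂ = δ

/-- The category of generalized homomorphisms from `Γ ⇉ Γ₀` to `G ⇉ ·`; morphisms
are `Γ`-`G`-equivariant maps over `Γ₀`. -/
def GHObj (Γ : Gpd) (G : Type) [Group G] : Type _ := GenHom Γ (groupGpd G)

instance ghCategory (Γ : Gpd) (G : Type) [Group G] : Category (GHObj Γ G) where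
  Hom E₁ E₂ := {f : E₁.Z → E₂.Z //
    (∀ z, E₂.τ (f z) = E₁.τ z) ∧
    (∀ (z : E₁.Z) (g : G) (h : E₁.σ z = (groupGpd G).t g)
        (h' : E₂.σ (f z) = (groupGpd G).t g),
      f (E₁.ract z g h) = E₂.ract (f z) g h') ∧
    (∀ (γ : Γ.M) (z : E₁.Z) (h : Γ.s γ = E₁.τ z) (h' : Γ.s γ = E₂.τ (f z)),
      f (E₁.lact γ z h) = E₂.lact γ (f z) h')}
  id E := ⟨id, fun _ => rfl, fun _ _ _ _ => rfl, fun _ _ _ _ => rfl⟩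
  comp {E₁ E₂ E₃} f g := ⟨g.1 ∘ f.1,
    fun z => (g.2.1 (f.1 z)).trans (f.2.1 z),
    fun z gg h h' => by
      dsimp
      rw [f.2.2.1 z gg h rfl, g.2.2.1 (f.1 z) gg rfl h'],
    fun γ z h h' => by
      dsimp
      rw [f.2.2.2 γ z h (h.trans (f.2.1 z).symm),
        g.2.2.2 γ (f.1 z) (h.trans (f.2.1 z).symm) h']⟩
  id_comp _ := Subtype.ext rfl
  comp_id _ := Subtype.ext rfl
  assoc _ _ _ := Subtype.ext rfl

/-- A Morita equivalence (bibundle) between two groupoids: a generalized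
homomorphism which is biprincipal. -/
def GenHom.IsBiprincipal {Γ Λ : Gpd} (E : GenHom Γ Λ) : Prop :=
  Function.Surjective E.σ ∧
  ∀ z z', E.σ z = E.σ z' → ∃ (γ : Γ.M) (h : Γ.s γ = E.τ z),
    E.lact γ z h = z' ∧ ∀ (γ₂ : Γ.M) (h₂ : Γ.s γ₂ = E.τ z), E.lact γ₂ z h₂ = z' → γ₂ = γ

/-- Morita equivalence of Lie groupoids. -/
def Morita (Γ Λ : Gpd) : Prop := ∃ E : GenHom Γ Λ, E.IsBiprincipal


/-!
A principal `G`-bundle over `Γ` and a generalized homomorphism `Γ → (G ⇉ ·)` are the same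
data: the base map is `τ`, the map to the one-point space is forced, and the right `G`-action
is the right action of the groupoid `G ⇉ ·`.

For Morita invariance, a biprincipal bibundle `Z` between `Γ'` and `Γ` induces
`P ↦ (Z ×_{Γ₀} P)/Γ` from `Γ`-bundles to `Γ'`-bundles, and `Z` read backwards induces the
inverse functor. The composite of the two sends `p` to the class of `(w, [w, p])` for any `w`
over `p`; this is independent of `w` because any two such `w` differ by a unique arrow of `Γ'`.
Every morphism of principal bundles over a groupoid is invertible, so these maps assemble into
natural isomorphisms.
-/

namespace Gpd

variable {Γ : Gpd}

theorem comp_congr {g g' h h' : Γ.M} (hg : g = g') (hh : h = h')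
    (hc : Γ.s g = Γ.t h) (hc' : Γ.s g' = Γ.t h') :
    Γ.comp g h hc = Γ.comp g' h' hc' := by
  subst hg hh; rfl

theorem eq_inv_of_comp_eq_unit {g k : Γ.M} (hc : Γ.s k = Γ.t g)
    (h : Γ.comp k g hc = Γ.unit (Γ.s g)) : k = Γ.inv g :=
  calc k = Γ.comp k (Γ.unit (Γ.s k)) (Γ.t_unit _).symm := (Γ.comp_unit k).symm
    _ = Γ.comp k (Γ.comp g (Γ.inv g) (Γ.t_inv g).symm) (hc.trans (Γ.t_comp _ _ _).symm) :=
        comp_congr rfl ((congrArg Γ.unit hc).trans (Γ.comp_inv g).symm) _ _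
    _ = Γ.comp (Γ.comp k g hc) (Γ.inv g) ((Γ.s_comp _ _ _).trans (Γ.t_inv g).symm) :=
        (Γ.comp_assoc _ _ _ _ _).symm
    _ = Γ.comp (Γ.unit (Γ.t (Γ.inv g))) (Γ.inv g) (Γ.s_unit _) :=
        comp_congr (h.trans (congrArg Γ.unit (Γ.t_inv g).symm)) rfl _ _
    _ = Γ.inv g := Γ.unit_comp _

theorem inv_inv (g : Γ.M) : Γ.inv (Γ.inv g) = g :=
  (eq_inv_of_comp_eq_unit (Γ.t_inv g).symm
    ((Γ.comp_inv g).trans (congrArg Γ.unit (Γ.s_inv g).symm))).symm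

theorem inv_unit (x : Γ.O) : Γ.inv (Γ.unit x) = Γ.unit x := by
  refine (eq_inv_of_comp_eq_unit ((Γ.s_unit x).trans (Γ.t_unit x).symm) ?_).symm
  calc Γ.comp (Γ.unit x) (Γ.unit x) _
      = Γ.comp (Γ.unit (Γ.t (Γ.unit x))) (Γ.unit x) (Γ.s_unit _) :=
        comp_congr (congrArg Γ.unit (Γ.t_unit x).symm) rfl _ _
    _ = Γ.unit (Γ.s (Γ.unit x)) := (Γ.unit_comp _).trans (congrArg Γ.unit (Γ.s_unit x).symm)

theorem inv_comp_rev {g h : Γ.M} (hc : Γ.s g = Γ.t h) :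
    Γ.inv (Γ.comp g h hc) =
      Γ.comp (Γ.inv h) (Γ.inv g) ((Γ.s_inv h).trans (hc.symm.trans (Γ.t_inv g).symm)) := by
  refine (eq_inv_of_comp_eq_unit
    ((Γ.s_comp _ _ _).trans ((Γ.s_inv g).trans (Γ.t_comp g h hc).symm)) ?_).symm
  have hinner : Γ.comp (Γ.inv g) (Γ.comp g h hc)
      ((Γ.s_inv g).trans (Γ.t_comp g h hc).symm) = h :=
    calc _ = Γ.comp (Γ.comp (Γ.inv g) g (Γ.s_inv g)) h ((Γ.s_comp _ _ _).trans hc) :=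
          (Γ.comp_assoc _ _ _ _ _).symm
      _ = Γ.comp (Γ.unit (Γ.t h)) h (Γ.s_unit _) :=
          comp_congr ((Γ.inv_comp g).trans (congrArg Γ.unit hc)) rfl _ _
      _ = h := Γ.unit_comp h
  calc Γ.comp (Γ.comp (Γ.inv h) (Γ.inv g) _) (Γ.comp g h hc) _
      = Γ.comp (Γ.inv h) (Γ.comp (Γ.inv g) (Γ.comp g h hc) _) _ := Γ.comp_assoc _ _ _ _ _
    _ = Γ.comp (Γ.inv h) h (Γ.s_inv h) := comp_congr rfl hinner _ _
    _ = Γ.unit (Γ.s (Γ.comp g h hc)) :=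
        (Γ.inv_comp h).trans (congrArg Γ.unit (Γ.s_comp g h hc).symm)

end Gpd

namespace GenHom

variable {Γ Λ : Gpd} (E : GenHom Γ Λ)

theorem ract_congr {z z' : E.Z} {δ δ' : Λ.M} (hz : z = z') (hδ : δ = δ')
    (hc : E.σ z = Λ.t δ) (hc' : E.σ z' = Λ.t δ') :
    E.ract z δ hc = E.ract z' δ' hc' := by
  subst hz hδ; rfl

theorem lact_congr {γ γ' : Γ.M} {z z' : E.Z} (hγ : γ = γ') (hz : z = z')
    (hc : Γ.s γ = E.τ z) (hc' : Γ.s γ' = E.τ z') :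
    E.lact γ z hc = E.lact γ' z' hc' := by
  subst hγ hz; rfl

theorem ract_ract_inv (z : E.Z) (δ : Λ.M) (hc : E.σ z = Λ.t δ)
    (hc' : E.σ (E.ract z δ hc) = Λ.t (Λ.inv δ)) :
    E.ract (E.ract z δ hc) (Λ.inv δ) hc' = z :=
  calc E.ract (E.ract z δ hc) (Λ.inv δ) hc'
      = E.ract z (Λ.comp δ (Λ.inv δ) (Λ.t_inv δ).symm) (hc.trans (Λ.t_comp _ _ _).symm) :=
        E.ract_comp z δ (Λ.inv δ) hc (Λ.t_inv δ).symm
    _ = E.ract z (Λ.unit (E.σ z)) (Λ.t_unit _).symm :=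
        E.ract_congr rfl ((Λ.comp_inv δ).trans (congrArg Λ.unit hc.symm)) _ _
    _ = z := E.ract_unit z

theorem ract_inv_ract (z : E.Z) (δ : Λ.M) (hc : E.σ z = Λ.t (Λ.inv δ))
    (hc' : E.σ (E.ract z (Λ.inv δ) hc) = Λ.t δ) :
    E.ract (E.ract z (Λ.inv δ) hc) δ hc' = z :=
  have hc'' := hc'.trans (congrArg Λ.t (Gpd.inv_inv δ).symm)
  (E.ract_congr rfl (Gpd.inv_inv δ).symm hc' hc'').trans (E.ract_ract_inv z (Λ.inv δ) hc hc'')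

theorem lact_inv_lact (γ : Γ.M) (z : E.Z) (hc : Γ.s γ = E.τ z)
    (hc' : Γ.s (Γ.inv γ) = E.τ (E.lact γ z hc)) :
    E.lact (Γ.inv γ) (E.lact γ z hc) hc' = z :=
  calc E.lact (Γ.inv γ) (E.lact γ z hc) hc'
      = E.lact (Γ.comp (Γ.inv γ) γ (Γ.s_inv γ)) z ((Γ.s_comp _ _ _).trans hc) :=
        E.lact_comp (Γ.inv γ) γ z (Γ.s_inv γ) hc
    _ = E.lact (Γ.unit (E.τ z)) z (Γ.s_unit _) :=
        E.lact_congr ((Γ.inv_comp γ).trans (congrArg Γ.unit hc)) rfl _ _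
    _ = z := E.lact_unit z

theorem eq_unit_of_ract_eq_self {z : E.Z} {δ : Λ.M} (hc : E.σ z = Λ.t δ)
    (h : E.ract z δ hc = z) : δ = Λ.unit (E.σ z) := by
  obtain ⟨_, _, -, huniq⟩ := E.principal z z rfl
  exact (huniq δ hc h).trans (huniq _ _ (E.ract_unit z)).symm

end GenHom

namespace GpdBundle

variable {G : Type} [Group G] {Γ : Gpd} {P : Type} (B : GpdBundle G Γ P)

theorem gact_congr {γ γ' : Γ.M} {p p' : P} (hγ : γ = γ') (hp : p = p')
    (hc : Γ.s γ = B.proj p) (hc' : Γ.s γ' = B.proj p') :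
    B.gact γ p hc = B.gact γ' p' hc' := by
  subst hγ hp; rfl

theorem gact_inv_gact (γ : Γ.M) (p : P) (hc : Γ.s γ = B.proj p)
    (hc' : Γ.s (Γ.inv γ) = B.proj (B.gact γ p hc)) :
    B.gact (Γ.inv γ) (B.gact γ p hc) hc' = p :=
  calc B.gact (Γ.inv γ) (B.gact γ p hc) hc'
      = B.gact (Γ.comp (Γ.inv γ) γ (Γ.s_inv γ)) p ((Γ.s_comp _ _ _).trans hc) :=
        B.gact_comp (Γ.inv γ) γ p (Γ.s_inv γ) hc
    _ = B.gact (Γ.unit (B.proj p)) p (Γ.s_unit _) :=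
        B.gact_congr ((Γ.inv_comp γ).trans (congrArg Γ.unit hc)) rfl _ _
    _ = p := B.gact_unit p

end GpdBundle

namespace BdlObj

variable {G : Type} [Group G] {Γ : Gpd}

def toGenHom (A : BdlObj G Γ) : GHObj Γ G where
  Z := A.P
  τ := A.B.proj
  σ _ := ()
  lact := A.B.gact
  ract z g _ := A.B.act z g
  τ_lact := A.B.gact_proj
  σ_lact _ _ _ := rfl
  τ_ract z g _ := A.B.proj_act z g
  σ_ract _ _ _ := rfl
  lact_unit := A.B.gact_unit
  lact_comp := A.B.gact_comp
  ract_unit := A.B.act_one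
  ract_comp z g₁ g₂ _ _ := A.B.act_mul z g₁ g₂
  act_comm γ z g hγ _ := (A.B.gact_act γ z g hγ).symm
  τ_surj := A.hB.1
  principal z z' h := by
    obtain ⟨g, hg, huniq⟩ := A.hB.2 z z' h
    exact ⟨g, rfl, hg, fun g' _ hg' => huniq g' hg'⟩

end BdlObj

namespace GenHom

def toBdlObj {G : Type} [Group G] {Γ : Gpd} (E : GHObj Γ G) : BdlObj G Γ where
  P := E.Z
  B :=
    { proj := E.τ
      act p g := E.ract p g rfl
      act_one := E.ract_unit
      act_mul p g h := E.ract_comp p g h rfl rfl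
      proj_act p g := E.τ_ract p g rfl
      gact := E.lact
      gact_proj := E.τ_lact
      gact_unit := E.lact_unit
      gact_comp := E.lact_comp
      gact_act γ p g h := (E.act_comm γ p g h rfl).symm }
  hB := ⟨E.τ_surj, fun p q hpq => by
    obtain ⟨g, _, hg, huniq⟩ := E.principal p q hpq
    exact ⟨g, hg, fun g' hg' => huniq g' rfl hg'⟩⟩

end GenHom

def bdlEquivGenHom (G : Type) [Group G] (Γ : Gpd) : BdlObj G Γ ≌ GHObj Γ G :=
  CategoryTheory.Equivalence.mk
    { obj := BdlObj.toGenHom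
      map f := ⟨f.1, f.2.1, fun z g _ _ => f.2.2.1 z g, f.2.2.2⟩ }
    { obj := GenHom.toBdlObj
      map f := ⟨f.1, f.2.1, fun p g => f.2.2.1 p g rfl rfl, f.2.2.2⟩ }
    (NatIso.ofComponents fun _ => Iso.refl _)
    (NatIso.ofComponents fun _ => Iso.refl _)

theorem PrinBundle.IsPrincipal.act_left_cancel {G P X : Type} [Group G]
    {Bd : PrinBundle G P X} (hBd : Bd.IsPrincipal) {p : P} {g g' : G}
    (h : Bd.act p g = Bd.act p g') : g = g' := by
  obtain ⟨_, -, huniq⟩ := hBd.2 p (Bd.act p g') (Bd.proj_act p g').symm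
  exact (huniq g h).trans (huniq g' rfl).symm

namespace BdlObj

variable {G : Type} [Group G] {Γ : Gpd}

theorem hom_bijective {A₁ A₂ : BdlObj G Γ} (f : A₁ ⟶ A₂) : Function.Bijective f.1 := by
  obtain ⟨f, hproj, hact, -⟩ := f
  constructor
  · intro p q hpq
    obtain ⟨g, rfl, -⟩ :=
      A₁.hB.2 p q ((hproj p).symm.trans ((congrArg _ hpq).trans (hproj q)))
    have hg : g = 1 :=
      A₂.hB.act_left_cancel ((hact p g).symm.trans (hpq.symm.trans (A₂.B.act_one _).symm))
    rw [hg, A₁.B.act_one]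
  · intro q
    obtain ⟨p, hp⟩ := A₁.hB.1 (A₂.B.proj q)
    obtain ⟨g, hg, -⟩ := A₂.hB.2 (f p) q ((hproj p).trans hp)
    exact ⟨A₁.B.act p g, (hact p g).trans hg⟩

instance {A₁ A₂ : BdlObj G Γ} (f : A₁ ⟶ A₂) : IsIso f := by
  let e := Equiv.ofBijective f.1 (hom_bijective f)
  have he : ∀ q, f.1 (e.symm q) = q := e.apply_symm_apply
  refine ⟨⟨⟨e.symm, fun q => ?_, fun q g => ?_, fun γ q h h' => ?_⟩, ?_, ?_⟩⟩
  · rw [← f.2.1, he]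
  · exact (hom_bijective f).1 (by rw [f.2.2.1, he, he])
  · refine (hom_bijective f).1 ?_
    rw [he, f.2.2.2 γ (e.symm q) h' (h'.trans (f.2.1 _).symm)]
    exact A₂.B.gact_congr rfl (he q).symm h _
  · exact Subtype.ext (funext e.symm_apply_apply)
  · exact Subtype.ext (funext e.apply_symm_apply)

end BdlObj

namespace GenHom

section Induction

variable {G : Type} [Group G] {Γ Γ' : Gpd} (E : GenHom Γ' Γ) {P : Type} (B : GpdBundle G Γ P)

@[ext]
structure FiberProd where
  z : E.Z
  p : P
  hzp : E.σ z = B.proj p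

/-- `(z · δ, p) ~ (z, δ · p)`: the diagonal action of `Γ` on `Z ×_{Γ₀} P`. -/
def Balanced (x y : E.FiberProd B) : Prop :=
  ∃ (δ : Γ.M) (h₁ : E.σ y.z = Γ.t δ) (h₂ : Γ.s δ = B.proj x.p),
    x.z = E.ract y.z δ h₁ ∧ y.p = B.gact δ x.p h₂

theorem balanced_refl (x : E.FiberProd B) : E.Balanced B x x :=
  ⟨Γ.unit (E.σ x.z), (Γ.t_unit _).symm, (Γ.s_unit _).trans x.hzp, (E.ract_unit x.z).symm,
    ((B.gact_congr (congrArg Γ.unit x.hzp) rfl _ _).trans (B.gact_unit x.p)).symm⟩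

theorem balanced_symm {x y : E.FiberProd B} (h : E.Balanced B x y) : E.Balanced B y x := by
  obtain ⟨δ, h₁, h₂, hx, hy⟩ := h
  have h₁' : E.σ x.z = Γ.t (Γ.inv δ) :=
    (congrArg E.σ hx).trans ((E.σ_ract _ _ _).trans (Γ.t_inv δ).symm)
  have h₂' : Γ.s (Γ.inv δ) = B.proj y.p := (Γ.s_inv δ).trans (h₁.symm.trans y.hzp)
  refine ⟨Γ.inv δ, h₁', h₂', ?_, ?_⟩
  · exact (E.ract_ract_inv y.z δ h₁ ((E.σ_ract _ _ _).trans (Γ.t_inv δ).symm)).symm.trans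
      (E.ract_congr hx.symm rfl _ _)
  · exact (B.gact_inv_gact δ x.p h₂ ((Γ.s_inv δ).trans (B.gact_proj _ _ _).symm)).symm.trans
      (B.gact_congr rfl hy.symm _ _)

theorem balanced_trans {x y u : E.FiberProd B} (hxy : E.Balanced B x y)
    (hyu : E.Balanced B y u) : E.Balanced B x u := by
  obtain ⟨δ₁, h₁₁, h₁₂, hx, hy⟩ := hxy
  obtain ⟨δ₂, h₂₁, h₂₂, hy', hu⟩ := hyu
  have hc : Γ.s δ₂ = Γ.t δ₁ := h₂₂.trans (y.hzp.symm.trans h₁₁)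
  refine ⟨Γ.comp δ₂ δ₁ hc, h₂₁.trans (Γ.t_comp _ _ _).symm, (Γ.s_comp _ _ _).trans h₁₂,
    ?_, ?_⟩
  · exact hx.trans ((E.ract_congr hy' rfl _ _).trans (E.ract_comp u.z δ₂ δ₁ h₂₁ hc))
  · exact hu.trans ((B.gact_congr rfl hy _ _).trans (B.gact_comp δ₂ δ₁ x.p hc h₁₂))

def balancedSetoid : Setoid (E.FiberProd B) :=
  ⟨E.Balanced B, ⟨E.balanced_refl B, E.balanced_symm B, E.balanced_trans B⟩⟩

/-- The space `(Z ×_{Γ₀} P)/Γ` of the induced bundle. -/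
def IndSpace : Type := Quotient (E.balancedSetoid B)

def indMk (x : E.FiberProd B) : E.IndSpace B := Quotient.mk _ x

theorem indMk_sound {x y : E.FiberProd B} (h : E.Balanced B x y) : E.indMk B x = E.indMk B y :=
  Quotient.sound h

theorem indMk_ind {motive : E.IndSpace B → Prop} (h : ∀ x, motive (E.indMk B x))
    (q : E.IndSpace B) : motive q :=
  Quotient.ind h q

theorem p_eq_of_indMk_eq {x y : E.FiberProd B} (hz : x.z = y.z)
    (h : E.indMk B x = E.indMk B y) : x.p = y.p := by
  obtain ⟨δ, h₁, h₂, hx, hy⟩ := Quotient.exact h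
  have hδ : δ = Γ.unit (B.proj x.p) :=
    (E.eq_unit_of_ract_eq_self h₁ (hx.symm.trans hz)).trans
      (congrArg Γ.unit ((congrArg E.σ hz).symm.trans x.hzp))
  exact (hy.trans ((B.gact_congr hδ rfl h₂ (Γ.s_unit _)).trans (B.gact_unit x.p))).symm

variable {E B} in
def FiberProd.actRight (x : E.FiberProd B) (g : G) : E.FiberProd B :=
  ⟨x.z, B.act x.p g, x.hzp.trans (B.proj_act x.p g).symm⟩

variable {E B} in
def FiberProd.lact (γ : Γ'.M) (x : E.FiberProd B) (h : Γ'.s γ = E.τ x.z) : E.FiberProd B :=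
  ⟨E.lact γ x.z h, x.p, (E.σ_lact γ x.z h).trans x.hzp⟩

def indProj : E.IndSpace B → Γ'.O :=
  Quotient.lift (fun x => E.τ x.z) fun _ y ⟨δ, h₁, _, hx, _⟩ =>
    (congrArg E.τ hx).trans (E.τ_ract y.z δ h₁)

def indAct (q : E.IndSpace B) (g : G) : E.IndSpace B :=
  Quotient.lift (fun x => E.indMk B (x.actRight g)) (by
    rintro x _ ⟨δ, h₁, h₂, hx, hy⟩
    exact E.indMk_sound B ⟨δ, h₁, h₂.trans (B.proj_act x.p g).symm, hx,
      (congrArg (B.act · g) hy).trans (B.gact_act δ x.p g h₂).symm⟩) q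

open scoped Classical in
/-- Extended by the identity where `γ` does not act, so that it descends to the quotient without
a composability proof. -/
def lactOrSelf (γ : Γ'.M) (x : E.FiberProd B) : E.IndSpace B :=
  if h : Γ'.s γ = E.τ x.z then E.indMk B (x.lact γ h) else E.indMk B x

theorem lactOrSelf_respects (γ : Γ'.M) {x y : E.FiberProd B} (hxy : E.Balanced B x y) :
    E.lactOrSelf B γ x = E.lactOrSelf B γ y := by
  obtain ⟨δ, h₁, h₂, hx, hy⟩ := hxy
  have hτ : E.τ x.z = E.τ y.z := (congrArg E.τ hx).trans (E.τ_ract y.z δ h₁)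
  unfold lactOrSelf
  by_cases h : Γ'.s γ = E.τ x.z
  · rw [dif_pos h, dif_pos (h.trans hτ)]
    refine E.indMk_sound B ⟨δ, (E.σ_lact _ _ _).trans h₁, h₂, ?_, hy⟩
    exact (E.lact_congr rfl hx _ ((h.trans hτ).trans (E.τ_ract y.z δ h₁).symm)).trans
      (E.act_comm γ y.z δ (h.trans hτ) h₁).symm
  · rw [dif_neg h, dif_neg (fun h' => h (h'.trans hτ.symm))]
    exact E.indMk_sound B ⟨δ, h₁, h₂, hx, hy⟩

def indLact (γ : Γ'.M) (q : E.IndSpace B) : E.IndSpace B :=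
  Quotient.lift (E.lactOrSelf B γ) (fun _ _ => E.lactOrSelf_respects B γ) q

theorem indLact_mk (γ : Γ'.M) (x : E.FiberProd B) (h : Γ'.s γ = E.τ x.z) :
    E.indLact B γ (E.indMk B x) = E.indMk B (x.lact γ h) :=
  dif_pos h

def indBundle : GpdBundle G Γ' (E.IndSpace B) where
  proj := E.indProj B
  act := E.indAct B
  act_one := E.indMk_ind B fun x => congrArg (E.indMk B) (FiberProd.ext rfl (B.act_one x.p))
  act_mul := E.indMk_ind B fun x g h =>
    congrArg (E.indMk B) (FiberProd.ext rfl (B.act_mul x.p g h))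
  proj_act := E.indMk_ind B fun _ _ => rfl
  gact γ q _ := E.indLact B γ q
  gact_proj γ := E.indMk_ind B fun x (h : Γ'.s γ = E.τ x.z) => by
    rw [E.indLact_mk B γ x h]
    exact E.τ_lact γ x.z h
  gact_unit := E.indMk_ind B fun x =>
    (E.indLact_mk B _ x (Γ'.s_unit _)).trans
      (congrArg (E.indMk B) (FiberProd.ext (E.lact_unit x.z) rfl))
  gact_comp γ₁ γ₂ := E.indMk_ind B fun x h₁ (h₂ : Γ'.s γ₂ = E.τ x.z) => by
    rw [E.indLact_mk B γ₂ x h₂,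
      E.indLact_mk B γ₁ _ (h₁.trans (E.τ_lact γ₂ x.z h₂).symm),
      E.indLact_mk B _ x ((Γ'.s_comp γ₁ γ₂ h₁).trans h₂)]
    exact congrArg (E.indMk B) (FiberProd.ext (E.lact_comp γ₁ γ₂ x.z h₁ h₂) rfl)
  gact_act γ := E.indMk_ind B fun x g (h : Γ'.s γ = E.τ x.z) => by
    change E.indLact B γ (E.indMk B (x.actRight g)) =
      E.indAct B (E.indLact B γ (E.indMk B x)) g
    rw [E.indLact_mk B γ (x.actRight g) h, E.indLact_mk B γ x h]
    rfl

theorem indBundle_isPrincipal (hB : B.IsPrincipal) : (E.indBundle B).IsPrincipal := by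
  refine ⟨fun o => ?_, E.indMk_ind B fun x => E.indMk_ind B fun y hxy => ?_⟩
  · obtain ⟨z, rfl⟩ := E.τ_surj o
    obtain ⟨p, hp⟩ := hB.1 (E.σ z)
    exact ⟨E.indMk B ⟨z, p, hp.symm⟩, rfl⟩
  obtain ⟨δ, hδ, hxy, -⟩ := E.principal x.z y.z hxy
  have hsδ : Γ.s δ = B.proj y.p := (E.σ_ract _ _ _).symm.trans ((congrArg E.σ hxy).trans y.hzp)
  let y' : E.FiberProd B := ⟨x.z, B.gact δ y.p hsδ, hδ.trans (B.gact_proj δ y.p hsδ).symm⟩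
  have hy : E.indMk B y = E.indMk B y' := E.indMk_sound B ⟨δ, hδ, hsδ, hxy.symm, rfl⟩
  obtain ⟨g, hg, -⟩ := hB.2 x.p (B.gact δ y.p hsδ)
    (x.hzp.symm.trans (hδ.trans (B.gact_proj δ y.p hsδ).symm))
  have hgy : E.indMk B (x.actRight g) = E.indMk B y :=
    (congrArg (E.indMk B) (FiberProd.ext (x := x.actRight g) (y := y') rfl hg)).trans hy.symm
  refine ⟨g, hgy, fun g' hg' => hB.act_left_cancel (p := x.p) ?_⟩
  exact E.p_eq_of_indMk_eq B (x := x.actRight g') (y := x.actRight g) rfl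
    (hg'.trans hgy.symm)

def indObj (A : BdlObj G Γ) : BdlObj G Γ' :=
  ⟨E.IndSpace A.B, E.indBundle A.B, E.indBundle_isPrincipal A.B A.hB⟩

variable {E B} in
def FiberProd.map {P' : Type} {B' : GpdBundle G Γ P'} (f : P → P')
    (hf : ∀ p, B'.proj (f p) = B.proj p) (x : E.FiberProd B) : E.FiberProd B' :=
  ⟨x.z, f x.p, x.hzp.trans (hf x.p).symm⟩

variable (G) in
def indFunctor : BdlObj G Γ ⥤ BdlObj G Γ' where
  obj := E.indObj
  map {A₁ A₂} f := by
    refine ⟨Quotient.map' (FiberProd.map f.1 f.2.1) fun x _ ⟨δ, h₁, h₂, hx, hy⟩ =>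
        ⟨δ, h₁, h₂.trans (f.2.1 x.p).symm, hx,
          (congrArg f.1 hy).trans (f.2.2.2 δ x.p h₂ _)⟩, ?_, ?_, ?_⟩
    · exact E.indMk_ind A₁.B fun _ => rfl
    · exact E.indMk_ind A₁.B fun x g =>
        congrArg (E.indMk A₂.B) (FiberProd.ext rfl (f.2.2.1 x.p g))
    · refine fun γ => E.indMk_ind A₁.B fun x (h : Γ'.s γ = E.τ x.z) _ => ?_
      change Quotient.map' _ _ (E.indLact A₁.B γ (E.indMk A₁.B x)) =
        E.indLact A₂.B γ (E.indMk A₂.B (x.map f.1 f.2.1))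
      rw [E.indLact_mk A₁.B γ x h, E.indLact_mk A₂.B γ _ h]
      rfl
  map_id _ := Subtype.ext (funext (Quotient.ind fun _ => rfl))
  map_comp _ _ := Subtype.ext (funext (Quotient.ind fun _ => rfl))

end Induction

variable {Γ Γ' : Gpd}

def symm (E : GenHom Γ' Γ) (hE : E.IsBiprincipal) : GenHom Γ Γ' where
  Z := E.Z
  τ := E.σ
  σ := E.τ
  lact δ z h := E.ract z (Γ.inv δ) (h.symm.trans (Γ.t_inv δ).symm)
  ract z γ h := E.lact (Γ'.inv γ) z ((Γ'.s_inv γ).trans h.symm)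
  τ_lact δ _ _ := (E.σ_ract _ _ _).trans (Γ.s_inv δ)
  σ_lact _ _ _ := E.τ_ract _ _ _
  τ_ract _ _ _ := E.σ_lact _ _ _
  σ_ract _ γ _ := (E.τ_lact _ _ _).trans (Γ'.t_inv γ)
  lact_unit z :=
    (E.ract_congr rfl (Gpd.inv_unit (E.σ z)) _ (Γ.t_unit _).symm).trans (E.ract_unit z)
  lact_comp γ₁ γ₂ z h₁ _ :=
    (E.ract_comp z (Γ.inv γ₂) (Γ.inv γ₁) _
      ((Γ.s_inv γ₂).trans (h₁.symm.trans (Γ.t_inv γ₁).symm))).trans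
      (E.ract_congr rfl (Gpd.inv_comp_rev h₁).symm _ _)
  ract_unit z :=
    (E.lact_congr (Gpd.inv_unit (E.τ z)) rfl _ (Γ'.s_unit _)).trans (E.lact_unit z)
  ract_comp z γ₁ γ₂ _ h₂ :=
    (E.lact_comp (Γ'.inv γ₂) (Γ'.inv γ₁) z
      ((Γ'.s_inv γ₂).trans (h₂.symm.trans (Γ'.t_inv γ₁).symm)) _).trans
      (E.lact_congr (Gpd.inv_comp_rev h₂).symm rfl _ _)
  act_comm δ z γ hδ hγ :=
    (E.act_comm (Γ'.inv γ) z (Γ.inv δ) ((Γ'.s_inv γ).trans hγ.symm)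
      (hδ.symm.trans (Γ.t_inv δ).symm)).symm
  τ_surj := hE.1
  principal z z' h := by
    obtain ⟨γ, hγ, hz', huniq⟩ := hE.2 z z' h
    refine ⟨Γ'.inv γ, hγ.symm.trans (Γ'.t_inv γ).symm,
      (E.lact_congr (Gpd.inv_inv γ) rfl _ hγ).trans hz', fun γ₂ h₂ hz₂ => ?_⟩
    rw [← Gpd.inv_inv γ₂, huniq (Γ'.inv γ₂) ((Γ'.s_inv γ₂).trans h₂.symm) hz₂]

theorem symm_isBiprincipal (E : GenHom Γ' Γ) (hE : E.IsBiprincipal) :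
    (E.symm hE).IsBiprincipal := by
  refine ⟨E.τ_surj, fun z z' h => ?_⟩
  obtain ⟨δ, hδ, hz', huniq⟩ := E.principal z z' h
  refine ⟨Γ.inv δ, (Γ.s_inv δ).trans hδ.symm,
    (E.ract_congr rfl (Gpd.inv_inv δ) _ hδ).trans hz', fun δ₂ h₂ hz₂ => ?_⟩
  rw [← Gpd.inv_inv δ₂, huniq (Γ.inv δ₂) (h₂.symm.trans (Γ.t_inv δ₂).symm) hz₂]

variable {G : Type} [Group G] (E : GenHom Γ' Γ) (hE : E.IsBiprincipal)

section Unit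

variable {P : Type} (B : GpdBundle G Γ P)

def unitMk (w : E.Z) (p : P) (hw : E.σ w = B.proj p) :
    (E.symm hE).IndSpace (E.indBundle B) :=
  (E.symm hE).indMk (E.indBundle B) ⟨w, E.indMk B ⟨w, p, hw⟩, rfl⟩

theorem unitMk_eq_unitMk {w w' : E.Z} {p : P} (hw : E.σ w = B.proj p)
    (hw' : E.σ w' = B.proj p) : E.unitMk hE B w p hw = E.unitMk hE B w' p hw' := by
  obtain ⟨γ, hγ, rfl, -⟩ := hE.2 w w' (hw.trans hw'.symm)
  exact (E.symm hE).indMk_sound _ ⟨γ, E.τ_lact γ w hγ, hγ,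
    (E.lact_inv_lact γ w hγ _).symm, (E.indLact_mk B γ ⟨w, p, hw⟩ hγ).symm⟩

theorem unitMk_gact {w : E.Z} {p : P} (hw : E.σ w = B.proj p) {δ : Γ.M}
    (h : Γ.s δ = B.proj p) (hδw : Γ.s δ = E.σ w) :
    E.unitMk hE B (E.ract w (Γ.inv δ) (hδw.symm.trans (Γ.t_inv δ).symm)) (B.gact δ p h)
        ((E.σ_ract _ _ _).trans ((Γ.s_inv δ).trans (B.gact_proj δ p h).symm)) =
      ((E.symm hE).indBundle (E.indBundle B)).gact δ (E.unitMk hE B w p hw) hδw := by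
  refine Eq.trans ?_ ((E.symm hE).indLact_mk (E.indBundle B) δ ⟨w, _, rfl⟩ hδw).symm
  refine congrArg ((E.symm hE).indMk _) (FiberProd.ext rfl (E.indMk_sound B ?_).symm)
  exact ⟨δ, (E.σ_ract _ _ _).trans (Γ.s_inv δ), h, (E.ract_inv_ract _ _ _ _).symm, rfl⟩

variable (G) in
def unitHom (A : BdlObj G Γ) : A ⟶ (E.indFunctor G ⋙ (E.symm hE).indFunctor G).obj A := by
  refine ⟨fun p => E.unitMk hE A.B _ p (hE.1 (A.B.proj p)).choose_spec,
    fun p => (hE.1 (A.B.proj p)).choose_spec, fun _ _ => ?_, fun _ _ h h' => ?_⟩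
  · exact E.unitMk_eq_unitMk hE A.B _ _
  · exact (E.unitMk_eq_unitMk hE A.B _ _).trans (E.unitMk_gact hE A.B _ h h')

variable (G) in
def unitIso : 𝟭 (BdlObj G Γ) ≅ E.indFunctor G ⋙ (E.symm hE).indFunctor G :=
  NatIso.ofComponents (fun A => asIso (E.unitHom G hE A)) fun {_ A₂} _ =>
    Subtype.ext (funext fun _ => E.unitMk_eq_unitMk hE A₂.B _ _)

end Unit

variable (G) in
def indFunctorSymmSymmIso :
    ((E.symm hE).symm (E.symm_isBiprincipal hE)).indFunctor G ≅ E.indFunctor G := by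
  set E' := (E.symm hE).symm (E.symm_isBiprincipal hE)
  refine NatIso.ofComponents (fun A => asIso ⟨Quotient.map' (fun x => ⟨x.z, x.p, x.hzp⟩) ?_,
    E'.indMk_ind A.B fun _ => rfl, E'.indMk_ind A.B fun _ _ => rfl, fun γ => ?_⟩) ?_
  · rintro x y ⟨δ, h₁, h₂, hx, hy⟩
    exact ⟨δ, h₁, h₂, hx.trans (E.ract_congr rfl (Gpd.inv_inv δ) _ _), hy⟩
  · refine E'.indMk_ind A.B fun x (h : Γ'.s γ = E.τ x.z) _ => ?_
    change Quotient.map' _ _ (E'.indLact A.B γ (E'.indMk A.B x)) =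
      E.indLact A.B γ (E.indMk A.B ⟨x.z, x.p, x.hzp⟩)
    rw [E'.indLact_mk A.B γ x h, E.indLact_mk A.B γ ⟨x.z, x.p, x.hzp⟩ h]
    exact congrArg (E.indMk A.B) (FiberProd.ext (E.lact_congr (Gpd.inv_inv γ) rfl _ _) rfl)
  · exact fun _ => Subtype.ext (funext (Quotient.ind fun _ => rfl))

variable (G) in
def moritaEquiv : BdlObj G Γ ≌ BdlObj G Γ' :=
  CategoryTheory.Equivalence.mk (E.indFunctor G) ((E.symm hE).indFunctor G) (E.unitIso G hE)
    (Functor.isoWhiskerLeft _ (E.indFunctorSymmSymmIso G hE).symm ≪≫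
      ((E.symm hE).unitIso G (E.symm_isBiprincipal hE)).symm)

end GenHom

/-- **Proposition 2.13 and its corollary.**
For a Lie groupoid `Γ ⇉ Γ₀`, the category of principal `G`-bundles over
`Γ ⇉ Γ₀` is equivalent to the category of generalized homomorphisms from
`Γ ⇉ Γ₀` to `G ⇉ ·`.  Consequently, Morita equivalent groupoids `Γ'`, `Γ` have
equivalent categories of principal `G`-bundles. -/
theorem bundles_equiv_generalized_homs (G : Type) [Group G] (Γ Γ' : Gpd) :
    Nonempty (BdlObj G Γ ≌ GHObj Γ G) ∧
      (Morita Γ' Γ → Nonempty (BdlObj G Γ' ≌ BdlObj G Γ)) :=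
  ⟨⟨bdlEquivGenHom G Γ⟩, fun ⟨E, hE⟩ => ⟨(E.moritaEquiv G hE).symm⟩⟩

end
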